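/- Let W_e and W be real m×m positive definite matrices with spectral decompositions W_e = N S² Nᵀ and W = Ñ S̃² Ñᵀ, where N and Ñ are m×m orthogonal matrices and S, S̃ are m×m diagonal matrices with positive diagonal entries. Set E = W − W_e and O = S⁻¹ Nᵀ E N S⁻¹, and assume ‖O‖₂ < 1. Define Ẽ = S Nᵀ Ñ S̃⁻² Ñᵀ N S − I_m. Then Ẽ = (I_m + O)⁻¹ − I_m; consequently ‖Ẽ‖₂ ≤ ‖O‖₂ / (1 − ‖O‖₂). Moreover ‖O‖₂ = ‖W_e^{-1/2} E W_e^{-1/2}‖₂, where W_e^{-1/2} is the inverse of the positive definite square root of W_e. -/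

import Mathlib

open Matrix

/-- Spectral norm (largest singular value / ℓ²→ℓ² operator norm) of a real matrix. -/
noncomputable def specNorm {α β : Type*} [Fintype α] [Fintype β] [DecidableEq α] [DecidableEq β]
    (A : Matrix α β ℝ) : ℝ :=
  ‖(Matrix.toEuclideanLin A).toContinuousLinearMap‖

section
open scoped ComplexOrder

/-- The positive semidefinite square root, with the definition `Matrix.PosSemidef.sqrt` had in
Mathlib (December 2024); that definition has since been removed from Mathlib. -/
noncomputable def Matrix.PosSemidef.sqrt {n 𝕜 : Type*} [Fintype n] [DecidableEq n] [RCLike 𝕜]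
    {A : Matrix n n 𝕜} (hA : A.PosSemidef) : Matrix n n 𝕜 :=
  hA.1.eigenvectorUnitary.1 * diagonal ((↑) ∘ (Real.sqrt ∘ hA.1.eigenvalues)) *
  (star hA.1.eigenvectorUnitary : Matrix n n 𝕜)

end

/-!
Write `W_e = M Mᵀ` with `M = N S`. In the coordinates whitened by `M⁻¹ = S⁻¹ Nᵀ` the matrix `W_e`
becomes `I` and `W` becomes `I + O`, while `Ẽ + I = Mᵀ W⁻¹ M`; hence `(Ẽ + I)(I + O) = I`.
The bound follows from `Ẽ = -(Ẽ + I) O` by submultiplicativity. Finally `W_e^{1/2} = N S Nᵀ`,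
so `W_e^{-1/2} E W_e^{-1/2} = N O Nᵀ`, and the spectral norm is invariant under orthogonal
conjugation.
-/

open scoped Matrix.Norms.L2Operator

theorem norm_sub_one_le_of_mul_one_add_eq_one {R : Type*} [NormedRing R] {x a : R}
    (h1 : ‖(1 : R)‖ ≤ 1) (hx : x * (1 + a) = 1) (ha : ‖a‖ < 1) :
    ‖x - 1‖ ≤ ‖a‖ / (1 - ‖a‖) := by
  have hx' : x - 1 = -(x * a) := by
    rw [mul_add, mul_one] at hx
    rw [← hx]; abel
  have hbound : ‖x - 1‖ ≤ (‖x - 1‖ + 1) * ‖a‖ :=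
    calc ‖x - 1‖ = ‖x * a‖ := by rw [hx', norm_neg]
      _ ≤ ‖x‖ * ‖a‖ := norm_mul_le x a
      _ ≤ (‖x - 1‖ + 1) * ‖a‖ := by
        gcongr
        calc ‖x‖ = ‖(x - 1) + 1‖ := by rw [sub_add_cancel]
          _ ≤ ‖x - 1‖ + ‖(1 : R)‖ := norm_add_le _ _
          _ ≤ ‖x - 1‖ + 1 := by gcongr
  rw [le_div_iff₀ (by linarith)]
  linarith

namespace Matrix

variable {n : Type*} [Fintype n] [DecidableEq n]

theorem specNorm_eq_norm {m : Type*} [Fintype m] [DecidableEq m] (A : Matrix m n ℝ) :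
    specNorm A = ‖A‖ := rfl

theorem l2_opNorm_one_le : ‖(1 : Matrix n n ℝ)‖ ≤ 1 := by
  rw [cstar_norm_def, _root_.map_one]
  exact ContinuousLinearMap.norm_id_le

theorem specNorm_conj_orthogonal {N : Matrix n n ℝ} (hN : Nᵀ * N = 1) (A : Matrix n n ℝ) :
    specNorm (N * A * Nᵀ) = specNorm A := by
  have hU : N ∈ unitary (Matrix n n ℝ) := by
    rw [← unitaryGroup, mem_unitaryGroup_iff', star_eq_conjTranspose,
      conjTranspose_eq_transpose_of_trivial, hN]
  have hUt : Nᵀ ∈ unitary (Matrix n n ℝ) := by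
    simpa [star_eq_conjTranspose] using Unitary.star_mem hU
  rw [specNorm_eq_norm, specNorm_eq_norm, CStarRing.norm_mul_mem_unitary _ hUt,
    CStarRing.norm_mem_unitary_mul _ hU]

theorem diagonal_inv_mul_diagonal {K : Type*} [Field K] {s : n → K} (hs : ∀ i, s i ≠ 0) :
    diagonal s⁻¹ * diagonal s = 1 := by
  rw [diagonal_mul_diagonal, ← diagonal_one]
  exact congrArg diagonal (funext fun i => inv_mul_cancel₀ (hs i))

theorem conj_diagonal_mul_conj_diagonal {R : Type*} [CommRing R] {N : Matrix n n R}
    (hN : Nᵀ * N = 1) (a b : n → R) :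
    N * diagonal a * Nᵀ * (N * diagonal b * Nᵀ) = N * diagonal (fun i => a i * b i) * Nᵀ :=
  calc N * diagonal a * Nᵀ * (N * diagonal b * Nᵀ)
      = N * diagonal a * (Nᵀ * N) * diagonal b * Nᵀ := by simp only [Matrix.mul_assoc]
    _ = N * (diagonal a * diagonal b) * Nᵀ := by rw [hN, Matrix.mul_one, Matrix.mul_assoc N]
    _ = N * diagonal (fun i => a i * b i) * Nᵀ := by rw [diagonal_mul_diagonal]

theorem conj_diagonal_inv_mul_conj_diagonal {K : Type*} [Field K] {N : Matrix n n K}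
    (hN : Nᵀ * N = 1) {s : n → K} (hs : ∀ i, s i ≠ 0) :
    N * diagonal s⁻¹ * Nᵀ * (N * diagonal s * Nᵀ) = 1 := by
  rw [conj_diagonal_mul_conj_diagonal hN, ← diagonal_mul_diagonal, diagonal_inv_mul_diagonal hs,
    Matrix.mul_one, mul_eq_one_comm.mp hN]

open scoped ComplexOrder MatrixOrder in
theorem PosSemidef.sqrt_eq_cfcSqrt {𝕜 : Type*} [RCLike 𝕜] {A : Matrix n n 𝕜}
    (hA : A.PosSemidef) : hA.sqrt = CFC.sqrt A := by
  rw [CFC.sqrt_eq_real_sqrt A hA.nonneg, cfcₙ_eq_cfc (hf0 := Real.sqrt_zero), hA.1.cfc_eq]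
  simp [IsHermitian.cfc, PosSemidef.sqrt, Unitary.conjStarAlgAut_apply]

open scoped ComplexOrder MatrixOrder in
theorem PosSemidef.sqrt_eq_of_mul_self_eq {𝕜 : Type*} [RCLike 𝕜] {A B : Matrix n n 𝕜}
    (hA : A.PosSemidef) (hB : B.PosSemidef) (h : B * B = A) : hA.sqrt = B := by
  rw [hA.sqrt_eq_cfcSqrt]
  exact CFC.sqrt_unique h hB.nonneg

theorem PosSemidef.sqrt_eq_conj_diagonal {A N : Matrix n n ℝ} (hA : A.PosSemidef)
    (hN : Nᵀ * N = 1) {s : n → ℝ} (hs : ∀ i, 0 ≤ s i)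
    (hA_eq : A = N * diagonal (fun i => s i ^ 2) * Nᵀ) : hA.sqrt = N * diagonal s * Nᵀ := by
  refine hA.sqrt_eq_of_mul_self_eq ?_ ?_
  · simpa only [conjTranspose_eq_transpose_of_trivial] using
      (posSemidef_diagonal_iff.mpr hs).mul_mul_conjTranspose_same N
  · rw [conj_diagonal_mul_conj_diagonal hN, hA_eq]
    simp only [sq]

theorem transpose_mul_mul_mul_one_add_mul_mul_transpose {R : Type*} [CommRing R]
    {M M' We W W' E : Matrix n n R}
    (hM : M' * M = 1) (hWe : We = M * Mᵀ) (hW : W' * W = 1) (hE : E = W - We) :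
    Mᵀ * W' * M * (1 + M' * E * M'ᵀ) = 1 := by
  have hMt : Mᵀ * M'ᵀ = 1 := by rw [← transpose_mul, hM, transpose_one]
  have hWe' : M' * We * M'ᵀ = 1 := by
    rw [hWe, show M' * (M * Mᵀ) * M'ᵀ = M' * M * (Mᵀ * M'ᵀ) by simp only [Matrix.mul_assoc],
      hM, hMt, Matrix.one_mul]
  have hOne : 1 + M' * E * M'ᵀ = M' * W * M'ᵀ := by
    rw [hE, Matrix.mul_sub, Matrix.sub_mul, hWe', add_sub_cancel]
  rw [hOne, show Mᵀ * W' * M * (M' * W * M'ᵀ) = Mᵀ * (W' * (M * M') * W) * M'ᵀ by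
    simp only [Matrix.mul_assoc], mul_eq_one_comm.mp hM, Matrix.mul_one, hW, Matrix.mul_one, hMt]

end Matrix

theorem stmt_15_general {m : ℕ}
    (We W : Matrix (Fin m) (Fin m) ℝ) (hWe : We.PosDef)
    (N Nt : Matrix (Fin m) (Fin m) ℝ) (s t : Fin m → ℝ)
    (hN : Nᵀ * N = 1) (hNt : Ntᵀ * Nt = 1) (hs : ∀ i, 0 < s i) (ht : ∀ i, 0 < t i)
    (hWe_spec : We = N * Matrix.diagonal (fun i => s i ^ 2) * Nᵀ)
    (hW_spec : W = Nt * Matrix.diagonal (fun i => t i ^ 2) * Ntᵀ)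
    (E O : Matrix (Fin m) (Fin m) ℝ)
    (hE : E = W - We)
    (hO : O = Matrix.diagonal (fun i => (s i)⁻¹) * Nᵀ * E * N *
        Matrix.diagonal (fun i => (s i)⁻¹))
    (hOnorm : specNorm O < 1)
    (Et : Matrix (Fin m) (Fin m) ℝ)
    (hEt : Et = Matrix.diagonal s * Nᵀ * Nt * Matrix.diagonal (fun i => (t i ^ 2)⁻¹) *
        Ntᵀ * N * Matrix.diagonal s - 1) :
    Et = (1 + O)⁻¹ - 1 ∧
    specNorm Et ≤ specNorm O / (1 - specNorm O) ∧
    specNorm O = specNorm ((hWe.posSemidef.sqrt)⁻¹ * E * (hWe.posSemidef.sqrt)⁻¹) := by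
  have hs0 : ∀ i, s i ≠ 0 := fun i => (hs i).ne'
  have hleft : (Et + 1) * (1 + O) = 1 := by
    have hM : diagonal s⁻¹ * Nᵀ * (N * diagonal s) = 1 := by
      rw [Matrix.mul_assoc, ← Matrix.mul_assoc Nᵀ, hN, Matrix.one_mul,
        diagonal_inv_mul_diagonal hs0]
    have hWe_M : We = N * diagonal s * (N * diagonal s)ᵀ := by
      rw [hWe_spec, transpose_mul, diagonal_transpose, ← Matrix.mul_assoc,
        Matrix.mul_assoc N (diagonal s), diagonal_mul_diagonal]
      simp only [sq]
    have hW_inv : Nt * diagonal (fun i => (t i ^ 2)⁻¹) * Ntᵀ * W = 1 := by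
      rw [hW_spec]
      exact conj_diagonal_inv_mul_conj_diagonal hNt fun i => pow_ne_zero 2 (ht i).ne'
    have := transpose_mul_mul_mul_one_add_mul_mul_transpose hM hWe_M hW_inv hE
    rw [hEt, hO, sub_add_cancel]
    simp only [transpose_mul, diagonal_transpose, transpose_transpose, Matrix.mul_assoc] at this ⊢
    -- `this` has `s⁻¹` where the goal has `fun i => (s i)⁻¹`; they agree by unfolding `Pi.inv`
    exact this
  have hconj : (hWe.posSemidef.sqrt)⁻¹ * E * (hWe.posSemidef.sqrt)⁻¹ = N * O * Nᵀ := by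
    rw [hWe.posSemidef.sqrt_eq_conj_diagonal hN (fun i => (hs i).le) hWe_spec,
      inv_eq_left_inv (conj_diagonal_inv_mul_conj_diagonal hN hs0), hO]
    simp only [Matrix.mul_assoc]
    rfl
  refine ⟨by rw [inv_eq_left_inv hleft, add_sub_cancel_right], ?_,
    by rw [hconj, specNorm_conj_orthogonal hN]⟩
  simpa only [specNorm_eq_norm, add_sub_cancel_right] using
    norm_sub_one_le_of_mul_one_add_eq_one l2_opNorm_one_le hleft hOnorm

/-- Core algebraic step of Theorem 3: the perturbation Ẽ equals (I + O)⁻¹ − I, hence is bounded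
by ‖O‖₂/(1 − ‖O‖₂), and ‖O‖₂ coincides with the relative perturbation η. -/
theorem stmt_15 {m : ℕ}
    (We W : Matrix (Fin m) (Fin m) ℝ) (hWe : We.PosDef) (hW : W.PosDef)
    (N Nt : Matrix (Fin m) (Fin m) ℝ) (s t : Fin m → ℝ)
    (hN : Nᵀ * N = 1) (hNt : Ntᵀ * Nt = 1) (hs : ∀ i, 0 < s i) (ht : ∀ i, 0 < t i)
    (hWe_spec : We = N * Matrix.diagonal (fun i => s i ^ 2) * Nᵀ)
    (hW_spec : W = Nt * Matrix.diagonal (fun i => t i ^ 2) * Ntᵀ)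
    (E O : Matrix (Fin m) (Fin m) ℝ)
    (hE : E = W - We)
    (hO : O = Matrix.diagonal (fun i => (s i)⁻¹) * Nᵀ * E * N *
        Matrix.diagonal (fun i => (s i)⁻¹))
    (hOnorm : specNorm O < 1)
    (Et : Matrix (Fin m) (Fin m) ℝ)
    (hEt : Et = Matrix.diagonal s * Nᵀ * Nt * Matrix.diagonal (fun i => (t i ^ 2)⁻¹) *
        Ntᵀ * N * Matrix.diagonal s - 1) :
    Et = (1 + O)⁻¹ - 1 ∧
    specNorm Et ≤ specNorm O / (1 - specNorm O) ∧
    specNorm O = specNorm ((hWe.posSemidef.sqrt)⁻¹ * E * (hWe.posSemidef.sqrt)⁻¹) :=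
  stmt_15_general We W hWe N Nt s t hN hNt hs ht hWe_spec hW_spec E O hE hO hOnorm Et hEt
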